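/- arXiv:0912.3635 — 5 statements merged into one kernel-verified Lean document; each statement's English description precedes it below -/
import Mathlib

section
/- Let H ⊂ G be an inclusion of topological groups. For a compact Hausdorff space X, the group C(X, G) of continuous maps acts naturally on the pointed set C(X, G/H) (pointed by the constant map at the coset H), and the quotient functor X ↦ C(X, G/H)/C(X, G) is split exact: for every pushout square X₁₂ → X₁, X₁₂ → X₂ of compact Hausdorff spaces with pushout X, where X₁₂ → X₁ admits a continuous retraction, the induced map of pointed sets C(X, G/H)/C(X,G) → (C(X₁, G/H)/C(X₁,G)) ×_{C(X₁₂, G/H)/C(X₁₂,G)} (C(X₂, G/H)/C(X₂,G)) is surjective with trivial kernel. -/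
/-!
Both halves come from gluing along the pushout. For surjectivity, a witness `g` of
`f₁|X₁₂ ~ f₂|X₁₂` extends to `X₁` as `g ∘ r`; moving `f₁` by it makes the two maps agree on
`X₁₂`, so they glue. For the kernel, trivialisations `g₁, g₂` of `f|X₁` and `f|X₂` differ on `X₁₂`
by a map into the stabiliser of the base point; extending that map along `r` and correcting `g₁`
by it makes `g₁, g₂` agree on `X₁₂`, so they glue to a trivialisation of `f`.
-/

universe u v

/-- The orbit relation on `C(X, G/H)` under the pointwise left action of the group
`C(X, G)` of continuous `G`-valued maps: `f ~ f'` iff `f' = g • f` for some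
continuous `g : X → G`. -/
def stmt1Rel (G : Type) [Group G] [TopologicalSpace G] (H : Subgroup G)
    (X : Type) [TopologicalSpace X] (f f' : C(X, G ⧸ H)) : Prop :=
  ∃ g : C(X, G), ∀ x : X, f' x = (g x) • (f x)

open ContinuousMap

section Pushout

variable {X₁₂ X₁ X₂ X : Type u} [TopologicalSpace X₁₂] [TopologicalSpace X₁]
  [TopologicalSpace X₂] [TopologicalSpace X]

/-- The universal property of the pushout of `i₁, i₂`, tested only against spaces in `Type v`;
commutativity of the square is a separate hypothesis. -/
def IsTopPushout (i₁ : C(X₁₂, X₁)) (i₂ : C(X₁₂, X₂)) (j₁ : C(X₁, X)) (j₂ : C(X₂, X)) : Prop :=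
  ∀ (Z : Type v) [TopologicalSpace Z] (g₁ : C(X₁, Z)) (g₂ : C(X₂, Z)),
    g₁.comp i₁ = g₂.comp i₂ → ∃! g : C(X, Z), g.comp j₁ = g₁ ∧ g.comp j₂ = g₂

variable {i₁ : C(X₁₂, X₁)} {i₂ : C(X₁₂, X₂)} {j₁ : C(X₁, X)} {j₂ : C(X₂, X)}

theorem IsTopPushout.ext (hpo : IsTopPushout.{u, v} i₁ i₂ j₁ j₂) (hcomm : j₁.comp i₁ = j₂.comp i₂)
    {Z : Type v} [TopologicalSpace Z] {φ ψ : C(X, Z)}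
    (h₁ : φ.comp j₁ = ψ.comp j₁) (h₂ : φ.comp j₂ = ψ.comp j₂) : φ = ψ := by
  have hglue : (ψ.comp j₁).comp i₁ = (ψ.comp j₂).comp i₂ := by
    rw [comp_assoc, hcomm, ← comp_assoc]
  exact (hpo Z _ _ hglue).unique ⟨h₁, h₂⟩ ⟨rfl, rfl⟩

end Pushout

section Action

variable {G Y : Type v} [Group G] [TopologicalSpace G] [TopologicalSpace Y] [MulAction G Y]
  {X : Type u} [TopologicalSpace X]

variable (G) in
def OrbitRel (f f' : C(X, Y)) : Prop :=
  ∃ g : C(X, G), ∀ x, f' x = g x • f x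

variable [ContinuousSMul G Y]

def ContinuousMap.pointwiseSMul (g : C(X, G)) (f : C(X, Y)) : C(X, Y) :=
  ⟨fun x => g x • f x, by fun_prop⟩

@[simp]
theorem ContinuousMap.pointwiseSMul_apply (g : C(X, G)) (f : C(X, Y)) (x : X) :
    g.pointwiseSMul f x = g x • f x :=
  rfl

end Action

section SplitExact

variable {G Y : Type v} [Group G] [TopologicalSpace G] [IsTopologicalGroup G]
  [TopologicalSpace Y] [MulAction G Y] [ContinuousSMul G Y]
  {X₁₂ X₁ X₂ X : Type u} [TopologicalSpace X₁₂] [TopologicalSpace X₁]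
  [TopologicalSpace X₂] [TopologicalSpace X]
  {i₁ : C(X₁₂, X₁)} {i₂ : C(X₁₂, X₂)} {j₁ : C(X₁, X)} {j₂ : C(X₂, X)} {r : C(X₁, X₁₂)}

theorem exists_orbitRel_of_isTopPushout (hpo : IsTopPushout.{u, v} i₁ i₂ j₁ j₂)
    (hr : r.comp i₁ = .id X₁₂) {f₁ : C(X₁, Y)} {f₂ : C(X₂, Y)}
    (h : OrbitRel G (f₁.comp i₁) (f₂.comp i₂)) :
    ∃ f : C(X, Y), OrbitRel G (f.comp j₁) f₁ ∧ OrbitRel G (f.comp j₂) f₂ := by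
  obtain ⟨g, hg⟩ := h
  have hri (z : X₁₂) : r (i₁ z) = z := congr($hr z)
  have hglue : ((g.comp r).pointwiseSMul f₁).comp i₁ = f₂.comp i₂ := by
    ext z
    simp [hri, hg]
  obtain ⟨f, ⟨hf₁, hf₂⟩, -⟩ := hpo Y _ _ hglue
  refine ⟨f, ⟨(g.comp r)⁻¹, fun x => ?_⟩, ⟨1, fun x => ?_⟩⟩
  · rw [hf₁]
    simp
  · rw [hf₂]
    simp

theorem orbitRel_const_of_isTopPushout (hpo : IsTopPushout.{u, v} i₁ i₂ j₁ j₂)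
    (hcomm : j₁.comp i₁ = j₂.comp i₂) (hr : r.comp i₁ = .id X₁₂) {f : C(X, Y)} {y₀ : Y}
    (h₁ : OrbitRel G (f.comp j₁) (.const X₁ y₀)) (h₂ : OrbitRel G (f.comp j₂) (.const X₂ y₀)) :
    OrbitRel G f (.const X y₀) := by
  obtain ⟨g₁, hg₁⟩ := h₁
  obtain ⟨g₂, hg₂⟩ := h₂
  set k : C(X₁₂, G) := g₂.comp i₂ * (g₁.comp i₁)⁻¹
  have hk (z : X₁₂) : k z • y₀ = y₀ := by
    have e₁ : (g₁ (i₁ z))⁻¹ • y₀ = f (j₁ (i₁ z)) := inv_smul_eq_iff.mpr (hg₁ (i₁ z))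
    have e₂ : g₂ (i₂ z) • f (j₂ (i₂ z)) = y₀ := (hg₂ (i₂ z)).symm
    calc k z • y₀ = g₂ (i₂ z) • (g₁ (i₁ z))⁻¹ • y₀ := mul_smul ..
      _ = y₀ := by rw [e₁, show j₁ (i₁ z) = j₂ (i₂ z) from congr($hcomm z), e₂]
  set g₁' : C(X₁, G) := k.comp r * g₁
  have hg₁' (x : X₁) : y₀ = g₁' x • f (j₁ x) := by
    have e : g₁ x • f (j₁ x) = y₀ := (hg₁ x).symm
    rw [show g₁' x = k (r x) * g₁ x from rfl, mul_smul, e, hk]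
  have hglue : g₁'.comp i₁ = g₂.comp i₂ := by
    rw [mul_comp, comp_assoc, hr, comp_id, mul_assoc, inv_mul_cancel, mul_one]
  obtain ⟨g, ⟨hgj₁, hgj₂⟩, -⟩ := hpo G _ _ hglue
  have hg : g.pointwiseSMul f = .const X y₀ := by
    refine hpo.ext hcomm ?_ ?_ <;> ext x
    · rw [comp_apply, pointwiseSMul_apply, ← comp_apply g j₁, hgj₁]
      exact (hg₁' x).symm
    · rw [comp_apply, pointwiseSMul_apply, ← comp_apply g j₂, hgj₂]
      exact (hg₂ x).symm
  exact ⟨g, fun x => congr($hg.symm x)⟩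

end SplitExact

theorem stmt_1_general
    (G : Type) [Group G] [TopologicalSpace G] [IsTopologicalGroup G] (H : Subgroup G)
    (X12 X1 X2 X : Type) [TopologicalSpace X12] [TopologicalSpace X1]
    [TopologicalSpace X2] [TopologicalSpace X]
    (i1 : C(X12, X1)) (i2 : C(X12, X2)) (j1 : C(X1, X)) (j2 : C(X2, X))
    (hcomm : j1.comp i1 = j2.comp i2)
    -- `X` is the pushout of `i1, i2` in the category of topological spaces:
    (hpo : ∀ (Z : Type) [TopologicalSpace Z] (g1 : C(X1, Z)) (g2 : C(X2, Z)),
      g1.comp i1 = g2.comp i2 → ∃! g : C(X, Z), g.comp j1 = g1 ∧ g.comp j2 = g2)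
    -- `i1` is split injective: it admits a continuous retraction:
    (r : C(X1, X12)) (hr : r.comp i1 = ContinuousMap.id X12) :
    -- trivial kernel:
    (∀ f : C(X, G ⧸ H),
        stmt1Rel G H X1 (f.comp j1) (ContinuousMap.const X1 ((1 : G) : G ⧸ H)) →
        stmt1Rel G H X2 (f.comp j2) (ContinuousMap.const X2 ((1 : G) : G ⧸ H)) →
        stmt1Rel G H X f (ContinuousMap.const X ((1 : G) : G ⧸ H))) ∧
    -- surjectivity onto the fiber product:
    (∀ (f1 : C(X1, G ⧸ H)) (f2 : C(X2, G ⧸ H)),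
        stmt1Rel G H X12 (f1.comp i1) (f2.comp i2) →
        ∃ f : C(X, G ⧸ H),
          stmt1Rel G H X1 (f.comp j1) f1 ∧ stmt1Rel G H X2 (f.comp j2) f2) :=
  ⟨fun _ => orbitRel_const_of_isTopPushout hpo hcomm hr,
    fun _ _ => exists_orbitRel_of_isTopPushout hpo hr⟩

/-- For an inclusion of topological groups `H ⊆ G`, the functor
`X ↦ C(X, G/H)/C(X, G)` on compact Hausdorff spaces is split exact: for every
pushout square of compact Hausdorff spaces with `i1 : X₁₂ → X₁` split injective,
the map to the fiber product of pointed orbit sets is surjective with trivial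
kernel (the base point being the class of the constant map at the trivial coset). -/
theorem stmt_1
    (G : Type) [Group G] [TopologicalSpace G] [IsTopologicalGroup G] (H : Subgroup G)
    (X12 X1 X2 X : Type) [TopologicalSpace X12] [TopologicalSpace X1]
    [TopologicalSpace X2] [TopologicalSpace X]
    [CompactSpace X12] [CompactSpace X1] [CompactSpace X2] [CompactSpace X]
    [T2Space X12] [T2Space X1] [T2Space X2] [T2Space X]
    (i1 : C(X12, X1)) (i2 : C(X12, X2)) (j1 : C(X1, X)) (j2 : C(X2, X))
    (hcomm : j1.comp i1 = j2.comp i2)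
    -- `X` is the pushout of `i1, i2` in the category of topological spaces:
    (hpo : ∀ (Z : Type) [TopologicalSpace Z] (g1 : C(X1, Z)) (g2 : C(X2, Z)),
      g1.comp i1 = g2.comp i2 → ∃! g : C(X, Z), g.comp j1 = g1 ∧ g.comp j2 = g2)
    -- `i1` is split injective: it admits a continuous retraction:
    (r : C(X1, X12)) (hr : r.comp i1 = ContinuousMap.id X12) :
    -- trivial kernel:
    (∀ f : C(X, G ⧸ H),
        stmt1Rel G H X1 (f.comp j1) (ContinuousMap.const X1 ((1 : G) : G ⧸ H)) →
        stmt1Rel G H X2 (f.comp j2) (ContinuousMap.const X2 ((1 : G) : G ⧸ H)) →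
        stmt1Rel G H X f (ContinuousMap.const X ((1 : G) : G ⧸ H))) ∧
    -- surjectivity onto the fiber product:
    (∀ (f1 : C(X1, G ⧸ H)) (f2 : C(X2, G ⧸ H)),
        stmt1Rel G H X12 (f1.comp i1) (f2.comp i2) →
        ∃ f : C(X, G ⧸ H),
          stmt1Rel G H X1 (f.comp j1) f1 ∧ stmt1Rel G H X2 (f.comp j2) f2) :=
  stmt_1_general G H X12 X1 X2 X i1 i2 j1 j2 hcomm hpo r hr
end

section
/- Let 𝔠 be the category of compact Hausdorff spaces and F : 𝔠 → Ab a contravariant split-exact functor (i.e. for each pushout square with one leg split injective, the sequence 0 → F(X) → F(X₁) × F(X₂) → F(X₁₂) is exact at the first two spots, equivalently F(X) → F(X₁) ×_{F(X₁₂)} F(X₂) is an isomorphism). If F(X) = 0 for every contractible compact Hausdorff space X, then F is homotopy invariant: for every compact Hausdorff X, the map F(X × [0,1]) → F(X) induced by the inclusion x ↦ (x, 0) is an isomorphism. -/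
/-
`x ↦ (x, 0)` has the retraction `(x, t) ↦ x`, so `F(X × I) → F(X)` has a section and is onto.
For injectivity, collapsing `X × {0}` to a point exhibits the cone `CX` as the pushout of
`X × I ← X → pt` along the split leg. Split exactness then lifts any `a ∈ F(X × I)` killed by
restriction to `X` to an element of `F(CX)`, which is `0` because the cone is contractible.
-/

open CategoryTheory Opposite

namespace Topology

variable (X : Type*)

def coneSetoid : Setoid (X × unitInterval) where
  r a b := a = b ∨ (a.2 = 0 ∧ b.2 = 0)
  iseqv.refl _ := .inl rfl
  iseqv.symm := by rintro _ _ (rfl | ⟨h₁, h₂⟩) <;> tauto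
  iseqv.trans := by rintro _ _ _ (rfl | ⟨h₁, h₂⟩) (rfl | ⟨h₃, h₄⟩) <;> tauto

/-- The cone on `X`, with apex `X × {0}` (not `X × {1}`), so that the cylinder's inclusion
`x ↦ (x, 0)` is the leg collapsed to the apex. -/
def Cone : Type _ := Quotient (coneSetoid X)

namespace Cone

variable {X}

def mk (p : X × unitInterval) : Cone X := Quotient.mk _ p

theorem mk_surjective : Function.Surjective (mk : X × unitInterval → Cone X) :=
  Quotient.mk_surjective

theorem mk_eq_mk_of_snd_eq_zero {p q : X × unitInterval} (hp : p.2 = 0) (hq : q.2 = 0) :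
    mk p = mk q :=
  Quotient.sound (.inr ⟨hp, hq⟩)

instance [Nonempty X] : Nonempty (Cone X) := ⟨mk (Classical.arbitrary X, 0)⟩

variable [TopologicalSpace X]

instance : TopologicalSpace (Cone X) := instTopologicalSpaceQuotient

instance [CompactSpace X] : CompactSpace (Cone X) := Quotient.compactSpace

theorem continuous_mk : Continuous (mk : X × unitInterval → Cone X) := continuous_quotient_mk'

def lift {Y : Type*} [TopologicalSpace Y] (f : C(X × unitInterval, Y))
    (hf : ∀ x y, f (x, 0) = f (y, 0)) : C(Cone X, Y) where
  toFun := Quotient.lift f <| by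
    rintro ⟨x, s⟩ ⟨y, t⟩ (h | ⟨hs, ht⟩)
    · rw [h]
    · dsimp only at hs ht
      rw [hs, ht, hf]
  continuous_toFun := f.continuous.quotient_lift _

/-- The cone as the set of points `t • (1, ev x)` of a real vector space: it is star-shaped
about `0`, and continuous functions separate its points away from the apex. -/
noncomputable def toVec : Cone X → ℝ × (C(X, ℝ) → ℝ) :=
  Quotient.lift (fun p => (p.2 : ℝ) • (1, fun f => f p.1)) <| by
    rintro p q (rfl | ⟨hp, hq⟩)
    · rfl
    · simp [hp, hq]

theorem toVec_mk (p : X × unitInterval) : toVec (mk p) = (p.2 : ℝ) • (1, fun f => f p.1) := rfl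

theorem continuous_toVec : Continuous (toVec : Cone X → _) :=
  continuous_quot_lift _ <| (continuous_subtype_val.comp continuous_snd).smul <|
    continuous_const.prodMk <| continuous_pi fun f => f.continuous.comp continuous_fst

theorem toVec_injective [T35Space X] : Function.Injective (toVec : Cone X → _) := by
  intro c d h
  obtain ⟨⟨x, t⟩, rfl⟩ := mk_surjective c
  obtain ⟨⟨y, u⟩, rfl⟩ := mk_surjective d
  simp only [toVec_mk, Prod.smul_mk, smul_eq_mul, mul_one, Prod.mk.injEq] at h
  obtain ⟨htu, hxy⟩ := h
  obtain rfl : t = u := Subtype.ext htu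
  by_cases ht : t = 0
  · exact mk_eq_mk_of_snd_eq_zero ht ht
  · have hev : ∀ f : C(X, ℝ), f x = f y := fun f =>
      mul_left_cancel₀ (unitInterval.coe_ne_zero.mpr ht) (congrFun hxy f)
    obtain rfl : x = y := by
      by_contra hne
      obtain ⟨f, hf, hfxy⟩ := separatesPoints_continuous_of_t35Space hne
      exact hfxy (hev ⟨f, hf⟩)
    rfl

instance [CompactSpace X] [T2Space X] : T2Space (Cone X) :=
  .of_injective_continuous toVec_injective continuous_toVec

theorem starConvex_range_toVec : StarConvex ℝ 0 (Set.range (toVec : Cone X → _)) := by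
  rintro _ ⟨c, rfl⟩ a b ha hb hab
  obtain ⟨⟨x, t⟩, rfl⟩ := mk_surjective c
  refine ⟨mk (x, ⟨b * t, unitInterval.mul_mem ⟨hb, by linarith⟩ t.2⟩), ?_⟩
  simp only [toVec_mk, smul_zero, zero_add, smul_smul]

instance [CompactSpace X] [T2Space X] [Nonempty X] : ContractibleSpace (Cone X) :=
  have := starConvex_range_toVec.contractibleSpace (Set.range_nonempty (toVec : Cone X → _))
  ((continuous_toVec.isClosedEmbedding toVec_injective).isEmbedding.toHomeomorph).contractibleSpace

end Cone

end Topology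

namespace CompHaus

open Topology

variable (X : CompHaus)

abbrev cylinder : CompHaus := of (X × unitInterval)

def cylinderBot : X ⟶ cylinder X := ConcreteCategory.ofHom ⟨fun x => (x, 0), by fun_prop⟩

def cylinderProj : cylinder X ⟶ X := ConcreteCategory.ofHom ⟨Prod.fst, continuous_fst⟩

theorem cylinderBot_cylinderProj : cylinderBot X ≫ cylinderProj X = 𝟙 X := rfl

theorem isIso_cylinderBot_of_isEmpty [IsEmpty X] : IsIso (cylinderBot X) :=
  ⟨cylinderProj X, rfl, by ext ⟨x, _⟩ <;> exact isEmptyElim x⟩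

noncomputable def cone : CompHaus := of (Cone X)

noncomputable def toCone : cylinder X ⟶ cone X := ConcreteCategory.ofHom ⟨Cone.mk, Cone.continuous_mk⟩

noncomputable def coneApex [Nonempty X] : of PUnit ⟶ cone X :=
  ConcreteCategory.ofHom ⟨fun _ => Cone.mk (Classical.arbitrary X, 0), continuous_const⟩

noncomputable def coneDesc {Y : CompHaus} (f : cylinder X ⟶ Y)
    (hf : ∀ x y, f (x, 0) = f (y, 0)) : cone X ⟶ Y :=
  ConcreteCategory.ofHom (Cone.lift (X := X) (Y := Y) (ConcreteCategory.hom f) hf)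

theorem cylinderBot_toCone [Nonempty X] :
    cylinderBot X ≫ toCone X = isTerminalPUnit.from X ≫ coneApex X := by
  ext x
  exact Cone.mk_eq_mk_of_snd_eq_zero rfl rfl

theorem isPushout_cone [Nonempty X] :
    IsPushout (cylinderBot X) (isTerminalPUnit.from X) (toCone X) (coneApex X) := by
  refine .of_isColimit (c := .mk _ _ (cylinderBot_toCone X))
    (Limits.PushoutCocone.IsColimit.mk _ (fun s => coneDesc X s.inl fun x y => ?_)
      (fun s => rfl) (fun s => ?_) (fun s m hm _ => ?_))
  · exact (ConcreteCategory.congr_hom s.condition x).trans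
      (ConcreteCategory.congr_hom s.condition y).symm
  · ext
    exact ConcreteCategory.congr_hom s.condition (Classical.arbitrary X)
  · ext c
    obtain ⟨p, rfl⟩ := Cone.mk_surjective c
    exact ConcreteCategory.congr_hom hm p

end CompHaus

namespace CategoryTheory.Functor

variable (F : CompHausᵒᵖ ⥤ AddCommGrpCat)

def IsSplitExact : Prop :=
  ∀ (X12 X1 X2 W : CompHaus) (i1 : X12 ⟶ X1) (i2 : X12 ⟶ X2)
    (j1 : X1 ⟶ W) (j2 : X2 ⟶ W), IsPushout i1 i2 j1 j2 →
    (∃ r : X1 ⟶ X12, i1 ≫ r = 𝟙 X12) →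
    ∀ (a1 : F.obj (op X1)) (a2 : F.obj (op X2)),
      F.map i1.op a1 = F.map i2.op a2 →
      ∃! a : F.obj (op W), F.map j1.op a = a1 ∧ F.map j2.op a = a2

variable {F}

theorem IsSplitExact.eq_zero_of_map_eq_zero (hF : F.IsSplitExact) {X12 X1 X2 W : CompHaus}
    {i1 : X12 ⟶ X1} {i2 : X12 ⟶ X2} {j1 : X1 ⟶ W} {j2 : X2 ⟶ W} (h : IsPushout i1 i2 j1 j2)
    (hi1 : ∃ r : X1 ⟶ X12, i1 ≫ r = 𝟙 X12) [Subsingleton (F.obj (op W))]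
    {a : F.obj (op X1)} (ha : F.map i1.op a = 0) : a = 0 := by
  obtain ⟨c, ⟨rfl, -⟩, -⟩ := hF _ _ _ _ _ _ _ _ h hi1 a 0 (by rw [ha, map_zero])
  rw [Subsingleton.elim c 0, map_zero]

end CategoryTheory.Functor

open CompHaus in
/-- A contravariant split-exact functor `F` from compact Hausdorff
spaces to abelian groups which vanishes on contractible spaces is homotopy
invariant: `F(X × [0,1]) → F(X)`, induced by `x ↦ (x, 0)`, is an isomorphism. -/
theorem stmt_2 (F : CompHausᵒᵖ ⥤ AddCommGrpCat)
    -- split exactness: for every pushout square with the leg `i1` split injective,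
    -- `F(W) → F(X1) ×_{F(X12)} F(X2)` is bijective:
    (hsplit : ∀ (X12 X1 X2 W : CompHaus) (i1 : X12 ⟶ X1) (i2 : X12 ⟶ X2)
      (j1 : X1 ⟶ W) (j2 : X2 ⟶ W), IsPushout i1 i2 j1 j2 →
      (∃ r : X1 ⟶ X12, i1 ≫ r = 𝟙 X12) →
      ∀ (a1 : F.obj (op X1)) (a2 : F.obj (op X2)),
        F.map i1.op a1 = F.map i2.op a2 →
        ∃! a : F.obj (op W), F.map j1.op a = a1 ∧ F.map j2.op a = a2)
    -- `F` vanishes on contractible compact Hausdorff spaces: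
    (hcontr : ∀ Z : CompHaus, ContractibleSpace Z → Subsingleton (F.obj (op Z))) :
    -- homotopy invariance:
    ∀ X : CompHaus,
      Function.Bijective
        (F.map (Quiver.Hom.op
          (ConcreteCategory.ofHom ⟨fun x => (x, (0 : unitInterval)), by continuity⟩ :
            X ⟶ CompHaus.of (Prod (X : Type) unitInterval)))) := by
  intro X
  change Function.Bijective (F.map (cylinderBot X).op)
  have hsection : Function.RightInverse (F.map (cylinderProj X).op) (F.map (cylinderBot X).op) :=
    fun b => by rw [← ConcreteCategory.comp_apply, ← F.map_comp, ← op_comp,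
      cylinderBot_cylinderProj, op_id, F.map_id, ConcreteCategory.id_apply]
  refine ⟨?_, hsection.surjective⟩
  -- The cone on `∅` is `∅`, not a point, so the pushout square needs `X` nonempty.
  rcases isEmpty_or_nonempty X with hX | hX
  · have := isIso_cylinderBot_of_isEmpty X
    exact (ConcreteCategory.bijective_of_isIso (F.map (cylinderBot X).op)).1
  · have := hcontr (cone X) (inferInstanceAs (ContractibleSpace (Topology.Cone X)))
    exact (injective_iff_map_eq_zero (F.map (cylinderBot X).op).hom).2 fun a =>
      Functor.IsSplitExact.eq_zero_of_map_eq_zero hsplit (isPushout_cone X) ⟨_, cylinderBot_cylinderProj X⟩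
end

section
/- Let 𝔽 be ℝ or ℂ, let V be an 𝔽-vector space of countable dimension, and let X be a compact Hausdorff space. Equip V with the finest topology making it the colimit of its compact convex subsets of finite-dimensional subspaces (equivalently: a map from a compact space to V is continuous iff it factors continuously through a compact subset of a finite-dimensional subspace). Then the natural linear map C(X, 𝔽) ⊗_𝔽 V → C(X, V) is bijective; in particular every continuous map X → V has image contained in a finite-dimensional subspace of V. -/
/-!
For a basis `(b i)` of `V`, every tensor is uniquely `∑ i, f i ⊗ b i`, and its image at `x` has
coordinates `f i x` in that basis, so the natural map is injective. A tensor `∑ j, f j ⊗ v j` is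
sent to `ι ∘ g` with `g = (f j)ⱼ : X → 𝔽ⁿ` continuous and `ι` linear; replacing `ι` by a linear
isomorphism of some `𝔽ᵐ` onto its range makes it injective while `g` stays continuous, since
linear maps between finite-dimensional spaces are continuous. Conversely, a continuous `ι ∘ g` is
the image of `∑ j, g j ⊗ ι eⱼ` for the standard basis `(eⱼ)`. The characterization of continuity
on `V` thus identifies the image with the continuous maps, each of which lands in the
finite-dimensional subspace `range ι`.
-/

open Function TensorProduct

section NaturalMap

variable {𝕜 : Type*} [Field 𝕜] [TopologicalSpace 𝕜] [IsTopologicalRing 𝕜]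
  {V : Type*} [AddCommGroup V] [Module 𝕜 V] {X : Type*} [TopologicalSpace X]
  (Φ : C(X, 𝕜) ⊗[𝕜] V →ₗ[𝕜] (X → V)) (hΦ : ∀ f v, Φ (f ⊗ₜ v) = fun x => f x • v)
include hΦ

theorem injective_of_tmul_eq : Injective Φ := by
  classical
  let b := Module.Basis.ofVectorSpace 𝕜 V
  have coord : ∀ (t : C(X, 𝕜) ⊗[𝕜] V) i x,
      equivFinsuppOfBasisRight b t i x = b.repr (Φ t x) i := by
    intro t i x
    induction t using TensorProduct.induction_on with
    | zero => simp
    | tmul f v => simp [hΦ, mul_comm]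
    | add s t hs ht => simp [hs, ht]
  refine (injective_iff_map_eq_zero Φ).2 fun t ht =>
    (equivFinsuppOfBasisRight b).map_eq_zero_iff.1 ?_
  ext i x
  simp [coord, ht]

theorem exists_comp_eq_of_tmul_eq (t : C(X, 𝕜) ⊗[𝕜] V) :
    ∃ (n : ℕ) (ι : (Fin n → 𝕜) →ₗ[𝕜] V) (g : X → Fin n → 𝕜), Continuous g ∧ Φ t = ι ∘ g := by
  obtain ⟨n, f, v, rfl⟩ := exists_sum_tmul_eq t
  refine ⟨n, Fintype.linearCombination 𝕜 v, fun x j => f j x,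
    continuous_pi fun j => (f j).continuous, ?_⟩
  ext x
  simp [hΦ, Fintype.linearCombination_apply]

theorem exists_tmul_eq_comp (n : ℕ) (ι : (Fin n → 𝕜) →ₗ[𝕜] V) (g : X → Fin n → 𝕜)
    (hg : Continuous g) : ∃ t, Φ t = ι ∘ g := by
  refine ⟨∑ j, ⟨fun x => g x j, (continuous_apply j).comp hg⟩ ⊗ₜ ι fun k => if j = k then 1 else 0,
    ?_⟩
  ext x
  simp [hΦ, LinearMap.pi_apply_eq_sum_univ ι (g x)]

end NaturalMap

theorem exists_injective_comp_eq {𝕜 : Type*} [NontriviallyNormedField 𝕜] [CompleteSpace 𝕜]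
    {V : Type*} [AddCommGroup V] [Module 𝕜 V] {K : Type*} [TopologicalSpace K] {m : ℕ}
    (ι : (Fin m → 𝕜) →ₗ[𝕜] V) (g : K → Fin m → 𝕜) (hg : Continuous g) :
    ∃ (n : ℕ) (ι' : (Fin n → 𝕜) →ₗ[𝕜] V) (g' : K → Fin n → 𝕜),
      Injective ι' ∧ Continuous g' ∧ ι ∘ g = ι' ∘ g' := by
  let b := Module.finBasis 𝕜 (LinearMap.range ι)
  refine ⟨_, (LinearMap.range ι).subtype ∘ₗ b.equivFun.symm.toLinearMap,
    b.equivFun ∘ ι.rangeRestrict ∘ g, ?_, ?_, ?_⟩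
  · exact Subtype.val_injective.comp b.equivFun.symm.injective
  · exact (b.equivFun.toLinearMap ∘ₗ ι.rangeRestrict).continuous_of_finiteDimensional.comp hg
  · ext x
    simp

theorem range_eq_setOf_continuous {𝕜 : Type*} [NontriviallyNormedField 𝕜] [CompleteSpace 𝕜]
    {V : Type*} [AddCommGroup V] [Module 𝕜 V] [TopologicalSpace V] {X : Type*}
    [TopologicalSpace X]
    (hX : ∀ f : X → V, Continuous f ↔ ∃ (n : ℕ) (ι : (Fin n → 𝕜) →ₗ[𝕜] V) (g : X → Fin n → 𝕜),
      Injective ι ∧ Continuous g ∧ f = ι ∘ g)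
    (Φ : C(X, 𝕜) ⊗[𝕜] V →ₗ[𝕜] (X → V)) (hΦ : ∀ f v, Φ (f ⊗ₜ v) = fun x => f x • v) :
    Set.range Φ = {f | Continuous f} := by
  ext f
  constructor
  · rintro ⟨t, rfl⟩
    obtain ⟨m, ι, g, hg, hΦt⟩ := exists_comp_eq_of_tmul_eq Φ hΦ t
    obtain ⟨n, ι', g', hι', hg', hcomp⟩ := exists_injective_comp_eq ι g hg
    exact (hX _).2 ⟨n, ι', g', hι', hg', hΦt.trans hcomp⟩
  · intro hf
    obtain ⟨n, ι, g, -, hg, rfl⟩ := (hX f).1 hf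
    exact exists_tmul_eq_comp Φ hΦ n ι g hg

/-- Let `𝔽 = ℝ` or `ℂ`, `V` an `𝔽`-vector space of countable
dimension carrying the fine (compactly generated) topology, characterized by:
a map from a compact Hausdorff space into `V` is continuous iff it factors
continuously and injectively through a finite-dimensional `𝔽`-vector space.
Then for any compact Hausdorff `X`, the natural map `C(X, 𝔽) ⊗ V → C(X, V)`,
`f ⊗ v ↦ (x ↦ f(x) • v)`, is bijective: as a linear map to the space of all
functions `X → V` it is injective with range exactly the continuous maps.
In particular every continuous `f : X → V` has image in a finite-dimensional
subspace. -/
theorem stmt_7 (𝔽 : Type) [RCLike 𝔽] (V : Type) [AddCommGroup V] [Module 𝔽 V]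
    [TopologicalSpace V]
    (hfine : ∀ (K : Type) [TopologicalSpace K] [CompactSpace K] [T2Space K]
      (f : K → V), Continuous f ↔
        ∃ (n : ℕ) (ι : (Fin n → 𝔽) →ₗ[𝔽] V) (g : K → (Fin n → 𝔽)),
          Injective ι ∧ Continuous g ∧ f = ι ∘ g)
    (X : Type) [TopologicalSpace X] [CompactSpace X] [T2Space X] :
    Injective (TensorProduct.lift
        (LinearMap.mk₂ 𝔽 (fun (f : C(X, 𝔽)) (v : V) => fun x : X => f x • v)
          (fun f f' v => by funext x; simp [add_smul]
            )
          (fun c f v => by funext x; simp [mul_smul]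
            )
          (fun f v v' => by funext x; simp [smul_add]
            )
          (fun c f v => by funext x; simp only [Pi.smul_apply]; rw [smul_comm]
            )) :
      TensorProduct 𝔽 C(X, 𝔽) V →ₗ[𝔽] (X → V)) ∧
    Set.range (TensorProduct.lift
        (LinearMap.mk₂ 𝔽 (fun (f : C(X, 𝔽)) (v : V) => fun x : X => f x • v)
          (fun f f' v => by funext x; simp [add_smul]
            )
          (fun c f v => by funext x; simp [mul_smul]
            )
          (fun f v v' => by funext x; simp [smul_add]
            )
          (fun c f v => by funext x; simp only [Pi.smul_apply]; rw [smul_comm]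
            )) :
      TensorProduct 𝔽 C(X, 𝔽) V →ₗ[𝔽] (X → V)) = {f : X → V | Continuous f} ∧
    ∀ f : X → V, Continuous f →
      ∃ W : Submodule 𝔽 V, FiniteDimensional 𝔽 W ∧ Set.range f ⊆ (W : Set V) := by
  refine ⟨injective_of_tmul_eq _ fun _ _ => rfl,
    range_eq_setOf_continuous (hfine X) _ fun _ _ => rfl, fun f hf => ?_⟩
  obtain ⟨n, ι, g, -, -, rfl⟩ := (hfine X f).1 hf
  exact ⟨LinearMap.range ι, inferInstance, Set.range_comp_subset_range g ι⟩
end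

section
/- Let X be a compact Hausdorff space and D ⊆ ℂ the closed unit disk. Then the algebra C(X) of continuous complex-valued functions on X is the filtered colimit of its subalgebras generated by finite subsets of C(X, D), and the natural map π : colim_{F} C(P_F) → C(X) is a split surjection of ℂ-algebras, where for each finite F ⊆ C(X, D), Y_F ⊆ ℂ^F is the Zariski closure of the image of α_F : X → ℂ^F, x ↦ (f(x))_{f∈F}, and P_F = D^F ∩ Y_F is a compact polyhedron containing α_F(X). -/
def Pol (X : Type) [TopologicalSpace X] (s : Finset C(X, ℂ)) : Set (↥s → ℂ) :=
  {y | (∀ p : MvPolynomial (↥s) ℂ,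
          (∀ x : X, MvPolynomial.eval (fun f : ↥s => (f.1 : C(X, ℂ)) x) p = 0) →
          MvPolynomial.eval y p = 0) ∧
       ∀ f : ↥s, ‖y f‖ ≤ 1}

open MvPolynomial

theorem exists_norm_le_one_mem_adjoin_singleton {𝕜 A : Type*} [RCLike 𝕜] [SeminormedRing A]
    [NormedAlgebra 𝕜 A] (g : A) : ∃ f : A, ‖f‖ ≤ 1 ∧ g ∈ Algebra.adjoin 𝕜 {f} := by
  set c : ℝ := ‖g‖ + 1
  have hc : 0 < c := by positivity
  refine ⟨((c : 𝕜)⁻¹) • g, ?_, ?_⟩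
  · rw [norm_smul, norm_inv, RCLike.norm_ofReal, abs_of_pos hc, inv_mul_le_iff₀ hc, mul_one]
    linarith
  · convert Subalgebra.smul_mem _ (Algebra.self_mem_adjoin_singleton 𝕜 ((c : 𝕜)⁻¹ • g)) (c : 𝕜)
    rw [smul_smul, mul_inv_cancel₀ (by exact_mod_cast hc.ne'), one_smul]

theorem Algebra.exists_algHom_adjoin_of_aeval_eq_zero {R A B : Type*} [CommRing R] [CommRing A]
    [CommRing B] [Algebra R A] [Algebra R B] (s : Set A) (φ : MvPolynomial s R →ₐ[R] B)
    (hφ : ∀ p, aeval ((↑) : s → A) p = 0 → φ p = 0) :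
    ∃ β : Algebra.adjoin R s →ₐ[R] B,
      ∀ (g : Algebra.adjoin R s) p, aeval ((↑) : s → A) p = g → β g = φ p := by
  have hrange := Algebra.adjoin_eq_range R s
  let π : MvPolynomial s R →ₐ[R] Algebra.adjoin R s :=
    (aeval ((↑) : s → A)).codRestrict _ fun p => hrange ▸ AlgHom.mem_range_self _ p
  have hπ : Function.Surjective π := by
    rintro ⟨g, hg⟩
    obtain ⟨p, rfl⟩ := (hrange ▸ hg : g ∈ (aeval ((↑) : s → A)).range)
    exact ⟨p, rfl⟩
  have hker : RingHom.ker π.toRingHom ≤ RingHom.ker φ.toRingHom := fun p hp =>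
    hφ p (congrArg Subtype.val (RingHom.mem_ker.mp hp))
  refine ⟨AlgHom.liftOfSurjective π hπ φ hker, fun g p hp => ?_⟩
  obtain rfl : π p = g := Subtype.ext hp
  exact AlgHom.liftOfSurjective_apply π hπ φ hker p

theorem MvPolynomial.aeval_continuousMap_apply {σ Y R : Type*} [TopologicalSpace Y] [CommRing R]
    [TopologicalSpace R] [IsTopologicalRing R] (v : σ → C(Y, R)) (p : MvPolynomial σ R) (y : Y) :
    aeval v p y = MvPolynomial.eval (fun i => v i y) p :=
  congrArg (fun q => q p) (comp_aeval v (ContinuousMap.evalAlgHom R R y))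

section Pol

variable {X : Type} [TopologicalSpace X]

theorem isCompact_pol (s : Finset C(X, ℂ)) : IsCompact (Pol X s) := by
  have hclosed : IsClosed (Pol X s) := by
    simp only [Pol, Set.ofPred_and, Set.ofPred_forall]
    refine IsClosed.inter ?_ ?_
    · exact isClosed_iInter fun p => isClosed_iInter fun _ =>
        isClosed_eq (continuous_eval p) continuous_const
    · exact isClosed_iInter fun f => isClosed_le (continuous_apply f).norm continuous_const
  refine (isCompact_closedBall (0 : ↥s → ℂ) 1).of_isClosed_subset hclosed fun y hy => ?_
  rw [mem_closedBall_zero_iff, pi_norm_le_iff_of_nonneg zero_le_one]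
  exact hy.2

theorem mem_pol {s : Finset C(X, ℂ)} (hs : ∀ f ∈ s, ∀ x : X, ‖f x‖ ≤ 1) (x : X) :
    (fun f : ↥s => (f.1 : C(X, ℂ)) x) ∈ Pol X s :=
  ⟨fun _ hp => hp x, fun f => hs f.1 f.2 x⟩

theorem exists_section_pol (s : Finset C(X, ℂ)) :
    ∃ β : Algebra.adjoin ℂ (↑s : Set C(X, ℂ)) →ₐ[ℂ] C(Pol X s, ℂ),
      ∀ g x (hx : (fun f : ↥s => (f.1 : C(X, ℂ)) x) ∈ Pol X s),
        β g ⟨_, hx⟩ = (g : C(X, ℂ)) x := by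
  let coord : ↥s → C(Pol X s, ℂ) := fun f =>
    ⟨fun y => y.1 f, (continuous_apply f).comp continuous_subtype_val⟩
  -- A polynomial vanishing on `α_s(X)` vanishes on its Zariski closure, hence on `P_s`.
  obtain ⟨β, hβ⟩ := Algebra.exists_algHom_adjoin_of_aeval_eq_zero (s : Set C(X, ℂ))
    (aeval coord) fun p hp => by
      ext y
      rw [aeval_continuousMap_apply]
      refine y.2.1 p fun x => ?_
      have hpx := congrArg (fun h : C(X, ℂ) => h x) hp
      simp only [aeval_continuousMap_apply, ContinuousMap.zero_apply] at hpx
      exact hpx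
  refine ⟨β, fun g x hx => ?_⟩
  obtain ⟨p, hp⟩ :
      ∃ p : MvPolynomial _ ℂ, aeval ((↑) : ↥(s : Set C(X, ℂ)) → C(X, ℂ)) p = g := by
    rw [← AlgHom.mem_range, ← Algebra.adjoin_eq_range ℂ]
    exact g.2
  rw [hβ g p hp, ← hp, aeval_continuousMap_apply, aeval_continuousMap_apply]
  rfl

end Pol

theorem stmt_11_general (X : Type) [TopologicalSpace X] [CompactSpace X] :
    -- (1)
    (∀ g : C(X, ℂ), ∃ s : Finset C(X, ℂ),
      (∀ f ∈ s, ∀ x : X, ‖f x‖ ≤ 1) ∧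
      g ∈ Algebra.adjoin ℂ (↑s : Set C(X, ℂ))) ∧
    -- (2)
    (∀ s : Finset C(X, ℂ), (∀ f ∈ s, ∀ x : X, ‖f x‖ ≤ 1) →
      IsCompact (Pol X s) ∧
      ∀ x : X, (fun f : ↥s => (f.1 : C(X, ℂ)) x) ∈ Pol X s) ∧
    -- (3) surjectivity of `π` …
    (∀ g : C(X, ℂ), ∃ s : Finset C(X, ℂ),
      ∃ hb : ∀ f ∈ s, ∀ x : X, ‖f x‖ ≤ 1,
      ∃ h : C(Pol X s, ℂ), ∀ x : X,
        h ⟨fun f : ↥s => (f.1 : C(X, ℂ)) x,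
            ⟨fun p hp => hp x, fun f => hb f.1 f.2 x⟩⟩ = g x) ∧
    -- … and the algebra sections `β_s` splitting it:
    (∀ s : Finset C(X, ℂ),
      ∀ hb : ∀ f ∈ s, ∀ x : X, ‖f x‖ ≤ 1,
      ∃ β : (Algebra.adjoin ℂ (↑s : Set C(X, ℂ))) →ₐ[ℂ] C(Pol X s, ℂ),
        ∀ (g : Algebra.adjoin ℂ (↑s : Set C(X, ℂ))) (x : X),
          (β g) ⟨fun f : ↥s => (f.1 : C(X, ℂ)) x,
              ⟨fun p hp => hp x, fun f => hb f.1 f.2 x⟩⟩ = (g : C(X, ℂ)) x) := by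
  have generated : ∀ g : C(X, ℂ), ∃ s : Finset C(X, ℂ),
      (∀ f ∈ s, ∀ x : X, ‖f x‖ ≤ 1) ∧ g ∈ Algebra.adjoin ℂ (↑s : Set C(X, ℂ)) := fun g => by
    obtain ⟨f, hf, hg⟩ := exists_norm_le_one_mem_adjoin_singleton (𝕜 := ℂ) g
    refine ⟨{f}, fun f' hf' x => ?_, by simpa using hg⟩
    rw [Finset.mem_singleton.mp hf']
    exact (f.norm_coe_le_norm x).trans hf
  refine ⟨generated, fun s hs => ⟨isCompact_pol s, mem_pol hs⟩, fun g => ?_,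
    fun s hs => ?_⟩
  · obtain ⟨s, hs, hg⟩ := generated g
    obtain ⟨β, hβ⟩ := exists_section_pol s
    exact ⟨s, hs, β ⟨g, hg⟩, fun x => hβ ⟨g, hg⟩ x _⟩
  · obtain ⟨β, hβ⟩ := exists_section_pol s
    exact ⟨β, fun g x => hβ g x _⟩

/-- for a compact Hausdorff space `X`: (1) `C(X)` is the filtered
union of its subalgebras `ℂ⟨s⟩` generated by finite sets `s` of functions with
values in the unit disk; (2) each `P_s = Pol X s` is compact and contains the
image of `α_s`; (3) the natural map `π : colim_s C(P_s) → C(X)` (induced by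
`h ↦ h ∘ α_s`) is a split surjection of `ℂ`-algebras: it is surjective, and on
each `ℂ⟨s⟩` there is an algebra section `β_s : ℂ⟨s⟩ → C(P_s)` with
`π ∘ β_s = inclusion`. -/
theorem stmt_11 (X : Type) [TopologicalSpace X] [CompactSpace X] [T2Space X] :
    -- (1)
    (∀ g : C(X, ℂ), ∃ s : Finset C(X, ℂ),
      (∀ f ∈ s, ∀ x : X, ‖f x‖ ≤ 1) ∧
      g ∈ Algebra.adjoin ℂ (↑s : Set C(X, ℂ))) ∧
    -- (2)
    (∀ s : Finset C(X, ℂ), (∀ f ∈ s, ∀ x : X, ‖f x‖ ≤ 1) →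
      IsCompact (Pol X s) ∧
      ∀ x : X, (fun f : ↥s => (f.1 : C(X, ℂ)) x) ∈ Pol X s) ∧
    -- (3) surjectivity of `π` …
    (∀ g : C(X, ℂ), ∃ s : Finset C(X, ℂ),
      ∃ hb : ∀ f ∈ s, ∀ x : X, ‖f x‖ ≤ 1,
      ∃ h : C(Pol X s, ℂ), ∀ x : X,
        h ⟨fun f : ↥s => (f.1 : C(X, ℂ)) x,
            ⟨fun p hp => hp x, fun f => hb f.1 f.2 x⟩⟩ = g x) ∧
    -- … and the algebra sections `β_s` splitting it:
    (∀ s : Finset C(X, ℂ),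
      ∀ hb : ∀ f ∈ s, ∀ x : X, ‖f x‖ ≤ 1,
      ∃ β : (Algebra.adjoin ℂ (↑s : Set C(X, ℂ))) →ₐ[ℂ] C(Pol X s, ℂ),
        ∀ (g : Algebra.adjoin ℂ (↑s : Set C(X, ℂ))) (x : X),
          (β g) ⟨fun f : ↥s => (f.1 : C(X, ℂ)) x,
              ⟨fun p hp => hp x, fun f => hb f.1 f.2 x⟩⟩ = (g : C(X, ℂ)) x) :=
  stmt_11_general X
end

section
/- Let F : 𝔄 → Ab be a functor on a category of ℂ-algebras closed under kernels that is split exact on split extensions (for every extension 0 → A → B → C → 0 in 𝔄 admitting an algebra section C → B, the sequence 0 → F(A) → F(B) → F(C) → 0 is exact). Then for every split Milnor square in 𝔄 with corners A, B, C, D (A = B ×_D C, with B → D surjective and admitting a section), the sequence 0 → F(A) → F(B) ⊕ F(C) → F(D) → 0 is split exact. -/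
open Function

/-- A (not necessarily unital) `ℂ`-algebra. -/
structure NCAlg : Type 1 where
  carrier : Type
  [ring : NonUnitalRing carrier]
  [mod : Module ℂ carrier]
  [sc : SMulCommClass ℂ carrier carrier]
  [st : IsScalarTower ℂ carrier carrier]

attribute [instance] NCAlg.ring NCAlg.mod NCAlg.sc NCAlg.st

set_option maxHeartbeats 1000000 in
/-- let `𝔄` be a class of `ℂ`-algebras closed under kernels, and
`F` an abelian-group-valued functor on `𝔄` which is split exact on split
extensions in `𝔄`. Then for every split Milnor square in `𝔄` (a pullback square
`A = B ×_D C` with `B → D` surjective and admitting an algebra section), the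
sequence `0 → F(A) → F(B) ⊕ F(C) → F(D) → 0` is split exact. -/
theorem stmt_15 (P : NCAlg → Prop)
    (F0 : {A : NCAlg // P A} → Type) [∀ A, AddCommGroup (F0 A)]
    (Fmap : ∀ {A B : {A : NCAlg // P A}},
      (A.1.carrier →ₙₐ[ℂ] B.1.carrier) → (F0 A →+ F0 B))
    -- functoriality:
    (hFid : ∀ (A : {A : NCAlg // P A}) (x : F0 A),
      Fmap (NonUnitalAlgHom.id ℂ A.1.carrier) x = x)
    (hFcomp : ∀ (A B C : {A : NCAlg // P A})
      (f : A.1.carrier →ₙₐ[ℂ] B.1.carrier) (g : B.1.carrier →ₙₐ[ℂ] C.1.carrier)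
      (x : F0 A), Fmap (g.comp f) x = Fmap g (Fmap f x))
    -- `𝔄` is closed under kernels:
    (hker : ∀ (A B : {A : NCAlg // P A}) (f : A.1.carrier →ₙₐ[ℂ] B.1.carrier),
      ∃ (K : {A : NCAlg // P A}) (κ : K.1.carrier →ₙₐ[ℂ] A.1.carrier),
        Injective κ ∧ ∀ a, (∃ k, κ k = a) ↔ f a = 0)
    -- `F` is split exact on split extensions in `𝔄`:
    (hsplit : ∀ (A B C : {A : NCAlg // P A})
      (ι : A.1.carrier →ₙₐ[ℂ] B.1.carrier) (p : B.1.carrier →ₙₐ[ℂ] C.1.carrier)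
      (s : C.1.carrier →ₙₐ[ℂ] B.1.carrier),
      (∀ c, p (s c) = c) → Injective ι → (∀ b, p b = 0 ↔ ∃ a, ι a = b) →
      Injective (Fmap ι) ∧ Surjective (Fmap p) ∧
        (∀ y, Fmap p y = 0 ↔ ∃ x, Fmap ι x = y)) :
    -- conclusion: split Milnor squares go to split short exact sequences
    ∀ (A B C D : {A : NCAlg // P A})
      (f1 : A.1.carrier →ₙₐ[ℂ] B.1.carrier) (f2 : A.1.carrier →ₙₐ[ℂ] C.1.carrier)
      (g1 : B.1.carrier →ₙₐ[ℂ] D.1.carrier) (g2 : C.1.carrier →ₙₐ[ℂ] D.1.carrier)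
      (s : D.1.carrier →ₙₐ[ℂ] B.1.carrier),
      (∀ a, g1 (f1 a) = g2 (f2 a)) →
      (∀ b c, g1 b = g2 c → ∃! a, f1 a = b ∧ f2 a = c) →
      Surjective g1 → (∀ d, g1 (s d) = d) →
      (Injective (fun x : F0 A => (Fmap f1 x, Fmap f2 x)) ∧
       Surjective (fun y : F0 B × F0 C => Fmap g1 y.1 - Fmap g2 y.2) ∧
       (∀ y : F0 B × F0 C, Fmap g1 y.1 - Fmap g2 y.2 = 0 ↔
          ∃ x : F0 A, (Fmap f1 x, Fmap f2 x) = y) ∧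
       (∃ σ : F0 D →+ F0 B × F0 C,
          ∀ d, Fmap g1 (σ d).1 - Fmap g2 (σ d).2 = d)) := by
  intro A B C D f1 f2 g1 g2 s hcomm huniq hsurj hsec
  classical
  -- uniqueness helper
  have hinj : ∀ a a' : A.1.carrier, f1 a = f1 a' → f2 a = f2 a' → a = a' := by
    intro a a' h1 h2
    obtain ⟨x, hx, hux⟩ := huniq (f1 a) (f2 a) (hcomm a)
    exact (hux a ⟨rfl, rfl⟩).trans (hux a' ⟨h1.symm, h2.symm⟩).symm
  -- kernel of g1
  obtain ⟨K, κ, hκinj, hκker⟩ := hker B D g1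
  have hκ0 : ∀ k, g1 (κ k) = 0 := fun k => (hκker (κ k)).mp ⟨k, rfl⟩
  -- section σ : C → A of f2
  have hσex : ∀ c : C.1.carrier, ∃! a : A.1.carrier, f1 a = s (g2 c) ∧ f2 a = c :=
    fun c => huniq (s (g2 c)) c (hsec (g2 c))
  set σf : C.1.carrier → A.1.carrier := fun c => (hσex c).choose with hσf
  have hσ1 : ∀ c, f1 (σf c) = s (g2 c) := fun c => (hσex c).choose_spec.1.1
  have hσ2 : ∀ c, f2 (σf c) = c := fun c => (hσex c).choose_spec.1.2
  let σA : C.1.carrier →ₙₐ[ℂ] A.1.carrier :=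
    { toFun := σf
      map_smul' := fun r c => hinj (σf (r • c)) (r • σf c)
        (by rw [hσ1, map_smul, map_smul, map_smul, hσ1])
        (by rw [hσ2, map_smul, hσ2])
      map_zero' := hinj (σf 0) 0
        (by rw [hσ1, map_zero, map_zero, map_zero])
        (by rw [hσ2, map_zero])
      map_add' := fun c c' => hinj (σf (c + c')) (σf c + σf c')
        (by rw [hσ1, map_add, map_add, map_add, hσ1, hσ1])
        (by rw [hσ2, map_add, hσ2, hσ2])
      map_mul' := fun c c' => hinj (σf (c * c')) (σf c * σf c')
        (by rw [hσ1, map_mul, map_mul, map_mul, hσ1, hσ1])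
        (by rw [hσ2, map_mul, hσ2, hσ2]) }
  have hσA : ∀ c, σA c = σf c := fun _ => rfl
  -- ι : K → A
  have hιex : ∀ k : K.1.carrier, ∃! a : A.1.carrier, f1 a = κ k ∧ f2 a = 0 :=
    fun k => huniq (κ k) 0 (by rw [hκ0, map_zero])
  set ιf : K.1.carrier → A.1.carrier := fun k => (hιex k).choose with hιf
  have hι1 : ∀ k, f1 (ιf k) = κ k := fun k => (hιex k).choose_spec.1.1
  have hι2 : ∀ k, f2 (ιf k) = 0 := fun k => (hιex k).choose_spec.1.2
  let ιA : K.1.carrier →ₙₐ[ℂ] A.1.carrier :=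
    { toFun := ιf
      map_smul' := fun r k => hinj (ιf (r • k)) (r • ιf k)
        (by rw [hι1, map_smul, map_smul, hι1])
        (by rw [hι2, map_smul, hι2, smul_zero])
      map_zero' := hinj (ιf 0) 0
        (by rw [hι1, map_zero, map_zero])
        (by rw [hι2, map_zero])
      map_add' := fun k k' => hinj (ιf (k + k')) (ιf k + ιf k')
        (by rw [hι1, map_add, map_add, hι1, hι1])
        (by rw [hι2, map_add, hι2, hι2, add_zero])
      map_mul' := fun k k' => hinj (ιf (k * k')) (ιf k * ιf k')
        (by rw [hι1, map_mul, map_mul, hι1, hι1])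
        (by rw [hι2, map_mul, hι2, hι2, mul_zero]) }
  have hιA : ∀ k, ιA k = ιf k := fun _ => rfl
  -- split extension 0 → K → B → D → 0
  obtain ⟨hFκinj, -, hFg1ker⟩ :=
    hsplit K B D κ g1 s hsec hκinj (fun b => (hκker b).symm)
  -- split extension 0 → K → A → C → 0
  have hιAinj : Injective ιA := by
    intro k k' h
    exact hκinj (by rw [← hι1, ← hι1]; exact congrArg f1 h)
  have hιAker : ∀ a, f2 a = 0 ↔ ∃ k, ιA k = a := by
    intro a
    constructor
    · intro h
      have h0 : g1 (f1 a) = 0 := by rw [hcomm, h, map_zero]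
      obtain ⟨k, hk⟩ := (hκker (f1 a)).mpr h0
      exact ⟨k, hinj _ _ (by rw [hιA, hι1, hk]) (by rw [hιA, hι2, h])⟩
    · rintro ⟨k, rfl⟩
      exact hι2 k
  obtain ⟨hFιinj, -, hFf2ker⟩ :=
    hsplit K A C ιA f2 σA hσ2 hιAinj hιAker
  -- functoriality facts
  have hg1s : ∀ x, Fmap g1 (Fmap s x) = x := by
    intro x
    rw [← hFcomp]
    have : g1.comp s = NonUnitalAlgHom.id ℂ D.1.carrier := by
      ext d; exact hsec d
    rw [this, hFid]
  have hf1ι : ∀ x, Fmap f1 (Fmap ιA x) = Fmap κ x := by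
    intro x
    rw [← hFcomp]
    have : f1.comp ιA = κ := by ext k; exact hι1 k
    rw [this]
  have hf2σ : ∀ x, Fmap f2 (Fmap σA x) = x := by
    intro x
    rw [← hFcomp]
    have : f2.comp σA = NonUnitalAlgHom.id ℂ C.1.carrier := by
      ext c; exact hσ2 c
    rw [this, hFid]
  have hsq : ∀ x, Fmap g1 (Fmap f1 x) = Fmap g2 (Fmap f2 x) := by
    intro x
    rw [← hFcomp, ← hFcomp]
    have : g1.comp f1 = g2.comp f2 := by ext a; exact hcomm a
    rw [this]
  have hf2ι : ∀ k, Fmap f2 (Fmap ιA k) = 0 :=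
    fun k => (hFf2ker (Fmap ιA k)).mpr ⟨k, rfl⟩
  refine ⟨?_, ?_, ?_, ?_⟩
  · -- injectivity
    intro x y h
    simp only [Prod.mk.injEq] at h
    have h1 : Fmap f1 (x - y) = 0 := by rw [map_sub, h.1, sub_self]
    have h2 : Fmap f2 (x - y) = 0 := by rw [map_sub, h.2, sub_self]
    obtain ⟨k, hk⟩ := (hFf2ker (x - y)).mp h2
    have hk0 : Fmap κ k = 0 := by rw [← hf1ι, hk, h1]
    have : k = 0 := hFκinj (by rw [hk0, map_zero])
    have : x - y = 0 := by rw [← hk, this, map_zero]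
    exact sub_eq_zero.mp this
  · -- surjectivity
    intro d
    exact ⟨(Fmap s d, 0), by simp [hg1s]⟩
  · -- exactness
    intro ⟨y1, y2⟩
    constructor
    · intro h
      have h' : Fmap g1 y1 = Fmap g2 y2 := sub_eq_zero.mp h
      set x0 : F0 A := Fmap σA y2 with hx0
      have hb : Fmap g1 (y1 - Fmap f1 x0) = 0 := by
        rw [map_sub, hsq, hf2σ, h', sub_self]
      obtain ⟨k, hk⟩ := (hFg1ker (y1 - Fmap f1 x0)).mp hb
      refine ⟨x0 + Fmap ιA k, ?_⟩
      have e1 : Fmap f1 (x0 + Fmap ιA k) = y1 := by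
        rw [map_add, hf1ι, hk]; abel
      have e2 : Fmap f2 (x0 + Fmap ιA k) = y2 := by
        rw [map_add, hf2σ, hf2ι, add_zero]
      rw [e1, e2]
    · rintro ⟨x, hx⟩
      obtain ⟨h1, h2⟩ := Prod.mk.injEq .. ▸ hx
      simp only at *
      rw [← h1, ← h2, hsq, sub_self]
  · -- section
    exact ⟨(Fmap s).prod 0, fun d => by simp [hg1s]⟩
end
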